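/- arXiv:1805.02928 — 2 statements merged into one kernel-verified Lean document; each statement's English description precedes it below -/
import Mathlib

section
/- Define G_s(Y) = U_s(Y) ∫_Y^{Y₀} U_s(Y₁)^{-2} dY₁ for Y>0. Then ∂_Y( U_s² ∂_Y(G_s/U_s) ) = 0 for Y>0, G_s extends continuously to Y=0 with G_s(0) = 1/U_s'(0), and ‖G_s/(1+Y)‖_{L^∞(0,∞)} + ‖∂_Y G_s / log Y‖_{L^∞(0,1/2]} + ‖∂_Y G_s‖_{L^∞([1/2,∞))} < ∞. -/
/-!
Since `G_s / U_s = ∫_Y^{Y₀} U_s⁻²`, the quantity `U_s² ∂_Y (G_s / U_s)` is identically `-1`.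

The estimates rest on `U_s' U_s⁻² = -(U_s⁻¹)'`: for every constant `d`,
`d ∫_Y^{Y₀} U_s⁻² - U_s(Y)⁻¹ = ∫_Y^{Y₀} (d - U_s') U_s⁻² - U_s(Y₀)⁻¹`.
Near the wall `U_s(t) ≥ c t` and `U_s'` is Lipschitz, so if `|d - U_s'(t)| ≤ K t` the integrand
is `O(1/t)` and the right side is `O(log (Y₀ / Y))`. Taking `d = U_s'(0)` gives
`G_s(Y) - 1 / U_s'(0) = O(Y (1 + log (Y₀ / Y)))`, hence the limit and the boundedness of `G_s`
near `0`; taking `d = U_s'(Y)` gives `∂_Y G_s = U_s' ∫_Y^{Y₀} U_s⁻² - U_s⁻¹ = O(|log Y|)`.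
Away from the wall `U_s` is bounded above and below by positive constants, so the integral grows
at most linearly, which the decay `(1 + Y) |U_s'| ≤ M` absorbs in `∂_Y G_s`.
-/

open MeasureTheory Set Filter

noncomputable section

/-- The function `G_s(Y) = U_s(Y) ∫_Y^{Y₀} U_s(Y₁)^{-2} dY₁`. -/
def Gs (Us : ℝ → ℝ) (Y₀ : ℝ) (Y : ℝ) : ℝ :=
  Us Y * ∫ t in Y..Y₀, (Us t) ^ (-2 : ℤ)

open Topology intervalIntegral

lemma exists_forall_le_of_tendsto_atTop {f : ℝ → ℝ} {a L : ℝ} (hf : ContinuousOn f (Ici a))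
    (hlim : Tendsto f atTop (𝓝 L)) : ∃ B, ∀ t, a ≤ t → f t ≤ B := by
  obtain ⟨A, hA⟩ := eventually_atTop.1 (hlim.eventually (eventually_le_nhds (lt_add_one L)))
  obtain ⟨B, hB⟩ := isCompact_Icc.bddAbove_image (hf.mono (Icc_subset_Ici_self : Icc a A ⊆ Ici a))
  refine ⟨max B (L + 1), fun t ht => ?_⟩
  rcases le_total t A with htA | htA
  · exact (hB ⟨t, ⟨ht, htA⟩, rfl⟩).trans (le_max_left _ _)
  · exact (hA t htA).trans (le_max_right _ _)

lemma abs_sub_le_of_abs_deriv_le {f : ℝ → ℝ} {K a s t : ℝ} (hf : Differentiable ℝ f)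
    (hK : ∀ x, a ≤ x → |deriv f x| ≤ K) (hs : a ≤ s) (hst : s ≤ t) :
    |f t - f s| ≤ K * (t - s) := by
  have h := (convex_Ici a).norm_image_sub_le_of_norm_deriv_le (fun x _ => hf x)
    (fun x hx => hK x hx) hs (hs.trans hst)
  rwa [Real.norm_eq_abs, Real.norm_eq_abs, abs_of_nonneg (sub_nonneg.2 hst)] at h

lemma exists_pos_mul_le_of_deriv_pos {f : ℝ → ℝ} {a : ℝ} (hf : ContDiff ℝ 1 f) (hf0 : f 0 = 0)
    (ha : 0 ≤ a) (hpos : ∀ t ∈ Icc 0 a, 0 < deriv f t) :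
    ∃ c, 0 < c ∧ ∀ t ∈ Icc 0 a, c * t ≤ f t := by
  obtain ⟨t₀, ht₀, hmin⟩ := isCompact_Icc.exists_isMinOn (nonempty_Icc.2 ha)
    (hf.continuous_deriv le_rfl).continuousOn
  refine ⟨deriv f t₀, hpos t₀ ht₀, fun t ht => ?_⟩
  have h := (convex_Icc 0 a).mul_sub_le_image_sub_of_le_deriv hf.continuous.continuousOn
    (hf.differentiable one_ne_zero).differentiableOn (fun x hx => hmin (interior_subset hx))
    0 (left_mem_Icc.2 ha) t ht ht.1
  rwa [sub_zero, hf0, sub_zero] at h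

section Integral

variable {U : ℝ → ℝ} {Y₀ Y : ℝ}

lemma continuousOn_zpow_neg_two (hU : Continuous U) (hpos : ∀ t, 0 < t → 0 < U t) :
    ContinuousOn (fun t => U t ^ (-2 : ℤ)) (Ioi 0) := fun t ht =>
  (hU.continuousAt.zpow₀ _ (Or.inl (hpos t ht).ne')).continuousWithinAt

lemma intervalIntegrable_zpow_neg_two (hU : Continuous U) (hpos : ∀ t, 0 < t → 0 < U t)
    {a b : ℝ} (ha : 0 < a) (hb : 0 < b) :
    IntervalIntegrable (fun t => U t ^ (-2 : ℤ)) volume a b :=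
  ((continuousOn_zpow_neg_two hU hpos).mono (ordConnected_Ioi.uIcc_subset ha hb)).intervalIntegrable

lemma hasDerivAt_integral_zpow_neg_two (hU : Continuous U) (hpos : ∀ t, 0 < t → 0 < U t)
    (hY₀ : 0 < Y₀) (hY : 0 < Y) :
    HasDerivAt (fun W => ∫ t in W..Y₀, U t ^ (-2 : ℤ)) (-U Y ^ (-2 : ℤ)) Y :=
  integral_hasDerivAt_left (intervalIntegrable_zpow_neg_two hU hpos hY hY₀)
    ((continuousOn_zpow_neg_two hU hpos).stronglyMeasurableAtFilter isOpen_Ioi Y hY)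
    ((continuousOn_zpow_neg_two hU hpos).continuousAt (Ioi_mem_nhds hY))

lemma sq_mul_deriv_Gs_div_self (hU : Continuous U) (hpos : ∀ t, 0 < t → 0 < U t)
    (hY₀ : 0 < Y₀) (hY : 0 < Y) :
    U Y ^ 2 * deriv (fun W => Gs U Y₀ W / U W) Y = -1 := by
  have hloc : (fun W => Gs U Y₀ W / U W) =ᶠ[𝓝 Y] fun W => ∫ t in W..Y₀, U t ^ (-2 : ℤ) := by
    filter_upwards [Ioi_mem_nhds hY] with W hW
    rw [Gs, mul_div_cancel_left₀ _ (hpos W hW).ne']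
  rw [hloc.deriv_eq, (hasDerivAt_integral_zpow_neg_two hU hpos hY₀ hY).deriv]
  field_simp [(hpos Y hY).ne']

lemma hasDerivAt_sq_mul_deriv_Gs_div_self (hU : Continuous U) (hpos : ∀ t, 0 < t → 0 < U t)
    (hY₀ : 0 < Y₀) (hY : 0 < Y) :
    HasDerivAt (fun Z => U Z ^ 2 * deriv (fun W => Gs U Y₀ W / U W) Z) 0 Y :=
  (hasDerivAt_const Y (-1 : ℝ)).congr_of_eventuallyEq <| by
    filter_upwards [Ioi_mem_nhds hY] with Z hZ using sq_mul_deriv_Gs_div_self hU hpos hY₀ hZ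

lemma hasDerivAt_Gs (hU : Continuous U) (hpos : ∀ t, 0 < t → 0 < U t) {U' : ℝ}
    (hU' : HasDerivAt U U' Y) (hY₀ : 0 < Y₀) (hY : 0 < Y) :
    HasDerivAt (Gs U Y₀) (U' * (∫ t in Y..Y₀, U t ^ (-2 : ℤ)) - (U Y)⁻¹) Y := by
  refine (hU'.mul (hasDerivAt_integral_zpow_neg_two hU hpos hY₀ hY)).congr_deriv ?_
  rw [zpow_neg, zpow_two]
  field_simp [(hpos Y hY).ne']
  ring

lemma integral_deriv_mul_zpow_neg_two (hU : ContDiff ℝ 1 U) (hpos : ∀ t, 0 < t → 0 < U t)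
    {a b : ℝ} (ha : 0 < a) (hb : 0 < b) :
    ∫ t in a..b, deriv U t * U t ^ (-2 : ℤ) = (U a)⁻¹ - (U b)⁻¹ := by
  have hsub : uIcc a b ⊆ Ioi 0 := ordConnected_Ioi.uIcc_subset ha hb
  rw [integral_eq_sub_of_hasDerivAt (f := fun t => -(U t)⁻¹) (fun t ht => ?_)]
  · ring
  · exact ((hU.continuous_deriv le_rfl).continuousOn.mul
      ((continuousOn_zpow_neg_two hU.continuous hpos).mono hsub)).intervalIntegrable
  · refine ((hU.differentiable one_ne_zero t).hasDerivAt.inv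
      (hpos t (hsub ht)).ne').neg.congr_deriv ?_
    rw [zpow_neg, zpow_two]
    field_simp

end Integral

section NearWall

variable {U : ℝ → ℝ} {Y₀ Y c K : ℝ}

lemma abs_mul_integral_zpow_neg_two_sub_inv_le (hU : ContDiff ℝ 1 U)
    (hpos : ∀ t, 0 < t → 0 < U t) {d : ℝ} (hc : 0 < c) (hY : 0 < Y) (hYY₀ : Y ≤ Y₀)
    (hlow : ∀ t ∈ Icc Y Y₀, c * t ≤ U t) (hd : ∀ t ∈ Icc Y Y₀, |d - deriv U t| ≤ K * t) :
    |d * (∫ t in Y..Y₀, U t ^ (-2 : ℤ)) - (U Y)⁻¹|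
      ≤ K / c ^ 2 * (Real.log Y₀ - Real.log Y) + (U Y₀)⁻¹ := by
  have hY₀ : 0 < Y₀ := hY.trans_le hYY₀
  have hsub : uIcc Y Y₀ ⊆ Ioi 0 := ordConnected_Ioi.uIcc_subset hY hY₀
  have hcont : ContinuousOn (fun t => U t ^ (-2 : ℤ)) (uIcc Y Y₀) :=
    (continuousOn_zpow_neg_two hU.continuous hpos).mono hsub
  have hsplit : d * (∫ t in Y..Y₀, U t ^ (-2 : ℤ)) - (U Y)⁻¹
      = (∫ t in Y..Y₀, (d - deriv U t) * U t ^ (-2 : ℤ)) - (U Y₀)⁻¹ := by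
    simp_rw [sub_mul]
    rw [integral_sub (f := fun t => d * U t ^ (-2 : ℤ))
      (g := fun t => deriv U t * U t ^ (-2 : ℤ)) (hcont.intervalIntegrable.const_mul d)
      ((hU.continuous_deriv le_rfl).continuousOn.mul hcont).intervalIntegrable,
      intervalIntegral.integral_const_mul, integral_deriv_mul_zpow_neg_two hU hpos hY hY₀]
    ring
  have hpt : ∀ t ∈ Ioc Y Y₀, ‖(d - deriv U t) * U t ^ (-2 : ℤ)‖ ≤ K / c ^ 2 * t⁻¹ := by
    intro t ht
    have ht0 : 0 < t := hY.trans ht.1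
    have hUt : (c * t) ^ 2 ≤ U t ^ 2 :=
      pow_le_pow_left₀ (mul_pos hc ht0).le (hlow t (Ioc_subset_Icc_self ht)) 2
    have hdt := hd t (Ioc_subset_Icc_self ht)
    rw [Real.norm_eq_abs, abs_mul, zpow_neg, zpow_ofNat,
      abs_of_pos (inv_pos.2 (pow_pos (hpos t ht0) 2))]
    calc |d - deriv U t| * (U t ^ 2)⁻¹ ≤ (K * t) * ((c * t) ^ 2)⁻¹ :=
          mul_le_mul hdt (inv_anti₀ (by positivity) hUt) (by positivity)
            ((abs_nonneg _).trans hdt)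
      _ = K / c ^ 2 * t⁻¹ := by field_simp
  have hlog : ∫ t in Y..Y₀, K / c ^ 2 * t⁻¹ = K / c ^ 2 * (Real.log Y₀ - Real.log Y) := by
    rw [intervalIntegral.integral_const_mul, integral_inv fun h => lt_irrefl (0 : ℝ) (hsub h),
      Real.log_div hY₀.ne' hY.ne']
  rw [hsplit]
  calc _ ≤ |∫ t in Y..Y₀, (d - deriv U t) * U t ^ (-2 : ℤ)| + |(U Y₀)⁻¹| := abs_sub _ _
    _ ≤ _ := by
      rw [abs_of_pos (inv_pos.2 (hpos Y₀ hY₀)), ← hlog, ← Real.norm_eq_abs]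
      gcongr
      refine norm_integral_le_of_norm_le hYY₀ (Eventually.of_forall hpt) ?_
      exact (continuousOn_const.mul (continuousOn_inv₀.mono
        fun t ht => (hsub ht).ne')).intervalIntegrable

lemma abs_deriv_Gs_le_near (hU : ContDiff ℝ 1 U) (hpos : ∀ t, 0 < t → 0 < U t) (hc : 0 < c)
    (hY₀ : Y₀ ≤ 1) (hlow : ∀ t ∈ Icc 0 Y₀, c * t ≤ U t)
    (hlip : ∀ s ∈ Icc 0 Y₀, ∀ t ∈ Icc s Y₀, |deriv U t - deriv U s| ≤ K * (t - s))
    (hY : Y ∈ Ioc 0 Y₀) :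
    |deriv (Gs U Y₀) Y| ≤ (K / c ^ 2 + (U Y₀)⁻¹) * (1 - Real.log Y) := by
  have hY₀pos : 0 < Y₀ := hY.1.trans_le hY.2
  have hK : 0 ≤ K := by
    have h := hlip 0 ⟨le_rfl, hY₀pos.le⟩ Y₀ ⟨hY₀pos.le, le_rfl⟩
    nlinarith [abs_nonneg (deriv U Y₀ - deriv U 0)]
  have hkey := abs_mul_integral_zpow_neg_two_sub_inv_le (d := deriv U Y) hU hpos hc hY.1 hY.2
    (fun t ht => hlow t ⟨hY.1.le.trans ht.1, ht.2⟩) fun t ht => by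
      have h := hlip Y ⟨hY.1.le, hY.2⟩ t ht
      rw [abs_sub_comm] at h
      nlinarith [hY.1]
  have hlogY₀ : Real.log Y₀ ≤ 0 := Real.log_nonpos hY₀pos.le hY₀
  have hlogY : Real.log Y ≤ 0 := Real.log_nonpos hY.1.le (hY.2.trans hY₀)
  have hu : 0 < (U Y₀)⁻¹ := inv_pos.2 (hpos Y₀ hY₀pos)
  rw [(hasDerivAt_Gs hU.continuous hpos (hU.differentiable one_ne_zero Y).hasDerivAt
    hY₀pos hY.1).deriv]
  refine hkey.trans ?_
  have : 0 ≤ K / c ^ 2 := by positivity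
  nlinarith

lemma abs_Gs_sub_one_div_le (hU : ContDiff ℝ 1 U) (hpos : ∀ t, 0 < t → 0 < U t) (hc : 0 < c)
    (hd0 : 0 < deriv U 0) (hlow : ∀ t ∈ Icc 0 Y₀, c * t ≤ U t)
    (hup : ∀ t ∈ Icc 0 Y₀, U t ≤ K * t)
    (hlip : ∀ s ∈ Icc 0 Y₀, ∀ t ∈ Icc s Y₀, |deriv U t - deriv U s| ≤ K * (t - s))
    (hY : Y ∈ Ioc 0 Y₀) :
    |Gs U Y₀ Y - 1 / deriv U 0|
      ≤ K * Y / deriv U 0 * (K / c ^ 2 * (Real.log Y₀ - Real.log Y) + (U Y₀)⁻¹) := by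
  have hUY := hpos Y hY.1
  have hkey := abs_mul_integral_zpow_neg_two_sub_inv_le (d := deriv U 0) (K := K) hU hpos hc
    hY.1 hY.2 (fun t ht => hlow t ⟨hY.1.le.trans ht.1, ht.2⟩) fun t ht => by
      simpa [abs_sub_comm] using hlip 0 ⟨le_rfl, hY.1.le.trans hY.2⟩ t ⟨hY.1.le.trans ht.1, ht.2⟩
  have heq : Gs U Y₀ Y - 1 / deriv U 0
      = U Y / deriv U 0 * (deriv U 0 * (∫ t in Y..Y₀, U t ^ (-2 : ℤ)) - (U Y)⁻¹) := by
    rw [Gs]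
    field_simp
  have hUYK : U Y / deriv U 0 ≤ K * Y / deriv U 0 := by
    gcongr
    exact hup Y ⟨hY.1.le, hY.2⟩
  rw [heq, abs_mul, abs_of_pos (div_pos hUY hd0)]
  exact mul_le_mul hUYK hkey (abs_nonneg _) ((div_pos hUY hd0).le.trans hUYK)

lemma tendsto_Gs_nhdsGT_zero (hU : ContDiff ℝ 1 U) (hpos : ∀ t, 0 < t → 0 < U t) (hc : 0 < c)
    (hd0 : 0 < deriv U 0) (hY₀ : 0 < Y₀) (hlow : ∀ t ∈ Icc 0 Y₀, c * t ≤ U t)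
    (hup : ∀ t ∈ Icc 0 Y₀, U t ≤ K * t)
    (hlip : ∀ s ∈ Icc 0 Y₀, ∀ t ∈ Icc s Y₀, |deriv U t - deriv U s| ≤ K * (t - s)) :
    Tendsto (Gs U Y₀) (𝓝[>] 0) (𝓝 (1 / deriv U 0)) := by
  have hφ : Tendsto (fun Y => K * Y / deriv U 0 * (K / c ^ 2 * (Real.log Y₀ - Real.log Y)
      + (U Y₀)⁻¹)) (𝓝[>] 0) (𝓝 0) := by
    have hcont : Continuous fun Y => K / deriv U 0 * (K / c ^ 2 * (Y * Real.log Y₀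
        - Y * Real.log Y) + Y * (U Y₀)⁻¹) := by
      have := Real.continuous_mul_log
      fun_prop
    exact ((hcont.tendsto' 0 0 (by simp)).mono_left nhdsWithin_le_nhds).congr fun Y => by ring
  rw [tendsto_iff_dist_tendsto_zero]
  refine squeeze_zero' (Eventually.of_forall fun _ => dist_nonneg) ?_ hφ
  filter_upwards [Ioc_mem_nhdsGT hY₀] with Y hY
    using abs_Gs_sub_one_div_le hU hpos hc hd0 hlow hup hlip hY

lemma abs_Gs_le_near (hU : ContDiff ℝ 1 U) (hpos : ∀ t, 0 < t → 0 < U t) (hc : 0 < c)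
    (hd0 : 0 < deriv U 0) (hlow : ∀ t ∈ Icc 0 Y₀, c * t ≤ U t)
    (hup : ∀ t ∈ Icc 0 Y₀, U t ≤ K * t)
    (hlip : ∀ s ∈ Icc 0 Y₀, ∀ t ∈ Icc s Y₀, |deriv U t - deriv U s| ≤ K * (t - s))
    (hY : Y ∈ Ioc 0 Y₀) :
    |Gs U Y₀ Y| ≤ 1 / deriv U 0 + K / deriv U 0 * (K / c ^ 2 * Y₀ + Y₀ * (U Y₀)⁻¹) := by
  have hY₀ : 0 < Y₀ := hY.1.trans_le hY.2
  have hK : 0 ≤ K := by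
    have h := (hpos Y hY.1).trans_le (hup Y ⟨hY.1.le, hY.2⟩)
    nlinarith [hY.1]
  have hlog : Y * (Real.log Y₀ - Real.log Y) ≤ Y₀ := by
    have h := Real.log_le_sub_one_of_pos (div_pos hY₀ hY.1)
    rw [Real.log_div hY₀.ne' hY.1.ne'] at h
    have e : Y * (Y₀ / Y - 1) = Y₀ - Y := by field_simp [hY.1.ne']
    nlinarith [mul_le_mul_of_nonneg_left h hY.1.le, hY.1]
  have hu : 0 < (U Y₀)⁻¹ := inv_pos.2 (hpos Y₀ hY₀)
  have h := abs_Gs_sub_one_div_le hU hpos hc hd0 hlow hup hlip hY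
  calc |Gs U Y₀ Y| ≤ |1 / deriv U 0| + |Gs U Y₀ Y - 1 / deriv U 0| := by
        linarith [abs_sub_abs_le_abs_sub (Gs U Y₀ Y) (1 / deriv U 0)]
    _ ≤ 1 / deriv U 0 + K * Y / deriv U 0 * (K / c ^ 2 * (Real.log Y₀ - Real.log Y)
        + (U Y₀)⁻¹) := by
      rw [abs_of_pos (one_div_pos.2 hd0)]
      gcongr
    _ = 1 / deriv U 0 + K / deriv U 0 * (K / c ^ 2 * (Y * (Real.log Y₀ - Real.log Y))
        + Y * (U Y₀)⁻¹) := by ring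
    _ ≤ _ := by
      gcongr
      exact hY.2

end NearWall

section FarField

variable {U : ℝ → ℝ} {Y₀ Y r C : ℝ}

lemma abs_integral_zpow_neg_two_le_far (hpos : ∀ t, 0 < t → 0 < U t) (hr : 0 < r)
    (hrY₀ : r ≤ Y₀) (hY₀ : Y₀ ≤ 1) (hinv : ∀ t, r ≤ t → (U t)⁻¹ ≤ C) (hY : r ≤ Y) :
    |∫ t in Y..Y₀, U t ^ (-2 : ℤ)| ≤ C ^ 2 * (1 + Y) := by
  have h := norm_integral_le_of_norm_le_const (a := Y) (b := Y₀) (C := C ^ 2)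
    (f := fun t => U t ^ (-2 : ℤ)) fun t ht => by
      have hrt : r ≤ t := (le_min hY hrY₀).trans ht.1.le
      have hUt := inv_pos.2 (hpos t (hr.trans_le hrt))
      rw [Real.norm_eq_abs, zpow_neg, zpow_ofNat, ← inv_pow, abs_of_pos (pow_pos hUt 2)]
      exact pow_le_pow_left₀ hUt.le (hinv t hrt) 2
  rw [Real.norm_eq_abs] at h
  refine h.trans (mul_le_mul_of_nonneg_left ?_ (sq_nonneg C))
  rw [abs_le]
  constructor <;> linarith

lemma abs_Gs_le_far (hpos : ∀ t, 0 < t → 0 < U t) (hr : 0 < r) (hrY₀ : r ≤ Y₀) (hY₀ : Y₀ ≤ 1)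
    (hinv : ∀ t, r ≤ t → (U t)⁻¹ ≤ C) {B : ℝ} (hB : ∀ t, r ≤ t → U t ≤ B) (hY : r ≤ Y) :
    |Gs U Y₀ Y| ≤ B * C ^ 2 * (1 + Y) := by
  have hUY := hpos Y (hr.trans_le hY)
  rw [Gs, abs_mul, abs_of_pos hUY, mul_assoc]
  exact mul_le_mul (hB Y hY) (abs_integral_zpow_neg_two_le_far hpos hr hrY₀ hY₀ hinv hY)
    (abs_nonneg _) (hUY.le.trans (hB Y hY))

lemma abs_deriv_Gs_le_far (hU : Differentiable ℝ U) (hpos : ∀ t, 0 < t → 0 < U t) (hr : 0 < r)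
    (hrY₀ : r ≤ Y₀) (hY₀ : Y₀ ≤ 1) (hinv : ∀ t, r ≤ t → (U t)⁻¹ ≤ C) {K : ℝ}
    (hK : ∀ t, r ≤ t → |deriv U t| * (1 + t) ≤ K) (hY : r ≤ Y) :
    |deriv (Gs U Y₀) Y| ≤ K * C ^ 2 + C := by
  have hY0 : 0 < Y := hr.trans_le hY
  rw [(hasDerivAt_Gs hU.continuous hpos (hU Y).hasDerivAt (hr.trans_le hrY₀) hY0).deriv]
  calc _ ≤ |deriv U Y * ∫ t in Y..Y₀, U t ^ (-2 : ℤ)| + |(U Y)⁻¹| := abs_sub _ _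
    _ ≤ |deriv U Y| * (C ^ 2 * (1 + Y)) + C := by
      rw [abs_mul, abs_of_pos (inv_pos.2 (hpos Y hY0))]
      gcongr
      · exact abs_integral_zpow_neg_two_le_far hpos hr hrY₀ hY₀ hinv hY
      · exact hinv Y hY
    _ = |deriv U Y| * (1 + Y) * C ^ 2 + C := by ring
    _ ≤ K * C ^ 2 + C := by
      gcongr
      exact hK Y hY

end FarField

lemma exists_weighted_bounds_of_near_far {g : ℝ → ℝ} {Y₀ r A₁ A₂ A₃ A₄ : ℝ} (hrY₀ : r ≤ Y₀)
    (hr : r ≤ 1 / 2) (h₁ : ∀ Y ∈ Ioc 0 Y₀, |g Y| ≤ A₁)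
    (h₂ : ∀ Y ∈ Ioc 0 Y₀, |deriv g Y| ≤ A₂ * (1 - Real.log Y))
    (h₃ : ∀ Y, r ≤ Y → |g Y| ≤ A₃ * (1 + Y)) (h₄ : ∀ Y, r ≤ Y → |deriv g Y| ≤ A₄) :
    ∃ M : ℝ, 0 < M ∧
      (∀ Y ∈ Ioi (0:ℝ), |g Y| / (1 + Y) ≤ M) ∧
      (∀ Y ∈ Ioc (0:ℝ) (1/2), |deriv g Y / Real.log Y| ≤ M) ∧
      (∀ Y ∈ Ici (1/2 : ℝ), |deriv g Y| ≤ M) := by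
  set S := |A₁| + |A₂| + |A₃| + |A₄|
  have hlog2 : 0 < Real.log 2 := Real.log_pos one_lt_two
  have hS : 0 ≤ S := by positivity
  have hg : ∀ Y, 0 < Y → |g Y| ≤ S * (1 + Y) := by
    intro Y hY
    rcases le_or_gt Y Y₀ with hYY₀ | hYY₀
    · nlinarith [h₁ Y ⟨hY, hYY₀⟩, le_abs_self A₁, abs_nonneg A₂, abs_nonneg A₃, abs_nonneg A₄]
    · nlinarith [h₃ Y (hrY₀.trans hYY₀.le), le_abs_self A₃, abs_nonneg A₁, abs_nonneg A₂,
        abs_nonneg A₄]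
  have hg'far : ∀ Y, r ≤ Y → |deriv g Y| ≤ S := fun Y hY => by
    linarith [h₄ Y hY, le_abs_self A₄, abs_nonneg A₁, abs_nonneg A₂, abs_nonneg A₃]
  have hg'near : ∀ Y ∈ Ioc (0:ℝ) (1/2), |deriv g Y| ≤ S * (1 - Real.log Y) := by
    intro Y hY
    have hlogY : Real.log Y ≤ 0 := Real.log_nonpos hY.1.le (by linarith [hY.2])
    rcases le_or_gt Y Y₀ with hYY₀ | hYY₀
    · nlinarith [h₂ Y ⟨hY.1, hYY₀⟩, le_abs_self A₂, abs_nonneg A₁, abs_nonneg A₃, abs_nonneg A₄]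
    · nlinarith [hg'far Y (hrY₀.trans hYY₀.le)]
  refine ⟨S * (1 + (Real.log 2)⁻¹) + 1, by positivity, fun Y hY => ?_, fun Y hY => ?_,
    fun Y hY => ?_⟩
  · rw [div_le_iff₀ (by linarith [mem_Ioi.1 hY])]
    have hSM : S ≤ S * (1 + (Real.log 2)⁻¹) + 1 := by
      nlinarith [mul_nonneg hS (inv_pos.2 hlog2).le]
    nlinarith [hg Y hY, mul_le_mul_of_nonneg_right hSM (by linarith [mem_Ioi.1 hY] : 0 ≤ 1 + Y)]
  · have hL : Real.log Y ≤ -Real.log 2 := by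
      simpa [Real.log_inv] using Real.log_le_log hY.1 hY.2
    rw [abs_div, abs_of_neg (by linarith : Real.log Y < 0), div_le_iff₀ (by linarith)]
    have h := hg'near Y hY
    have : S * (Real.log 2)⁻¹ * Real.log 2 = S := by field_simp
    nlinarith [inv_pos.2 hlog2, mul_le_mul_of_nonneg_left hL (mul_nonneg hS (inv_pos.2 hlog2).le)]
  · linarith [hg'far Y (hr.trans hY), mul_nonneg hS (inv_pos.2 hlog2).le]

lemma abs_le_of_one_add_pow_three_mul_le {a b M Y : ℝ} (hY : 0 ≤ Y)
    (h : (1 + Y) ^ 3 * (|a| + |b|) ≤ M) : |a| * (1 + Y) ≤ M ∧ |a| ≤ M ∧ |b| ≤ M := by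
  have h1 : 1 + Y ≤ (1 + Y) ^ 3 := by nlinarith [sq_nonneg Y]
  refine ⟨?_, ?_, ?_⟩ <;> nlinarith [abs_nonneg a, abs_nonneg b]

theorem Gs_properties_general
    (Us : ℝ → ℝ) (UE Y₀ : ℝ)
    (hUsC2 : ContDiff ℝ 2 Us)
    (hUs0 : Us 0 = 0)
    (hUspos : ∀ Y : ℝ, 0 < Y → 0 < Us Y)
    (hUEpos : 0 < UE)
    (hUslim : Tendsto Us atTop (nhds UE))
    (hUsdecay : ∃ M : ℝ, ∀ Y : ℝ, 0 ≤ Y →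
      (1 + Y) ^ 3 * (|deriv Us Y| + |deriv (deriv Us) Y|) ≤ M)
    (hY₀pos : 0 < Y₀) (hY₀le : Y₀ ≤ 1)
    (hY₀mono : ∀ Y ∈ Icc (0:ℝ) (4 * Y₀), 0 < deriv Us Y) :
    (∀ Y ∈ Ioi (0:ℝ),
      HasDerivAt (fun Z : ℝ => (Us Z) ^ 2 * deriv (fun W : ℝ => Gs Us Y₀ W / Us W) Z) 0 Y) ∧
    Tendsto (Gs Us Y₀) (nhdsWithin 0 (Ioi 0)) (nhds (1 / deriv Us 0)) ∧
    (∃ M : ℝ, 0 < M ∧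
      (∀ Y ∈ Ioi (0:ℝ), |Gs Us Y₀ Y| / (1 + Y) ≤ M) ∧
      (∀ Y ∈ Ioc (0:ℝ) (1/2), |deriv (Gs Us Y₀) Y / Real.log Y| ≤ M) ∧
      (∀ Y ∈ Ici (1/2 : ℝ), |deriv (Gs Us Y₀) Y| ≤ M)) := by
  obtain ⟨M₀, hM₀⟩ := hUsdecay
  have hdecay := fun Y (hY : 0 ≤ Y) => abs_le_of_one_add_pow_three_mul_le hY (hM₀ Y hY)
  have hU1 : ContDiff ℝ 1 Us := hUsC2.of_le one_le_two
  have hd0 : 0 < deriv Us 0 := hY₀mono 0 ⟨le_rfl, by linarith⟩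
  obtain ⟨c, hc, hlow⟩ := exists_pos_mul_le_of_deriv_pos hU1 hUs0 hY₀pos.le
    fun t ht => hY₀mono t ⟨ht.1, by linarith [ht.2]⟩
  have hup : ∀ t ∈ Icc 0 Y₀, Us t ≤ M₀ * t := fun t ht => by
    simpa [hUs0] using (le_abs_self _).trans (abs_sub_le_of_abs_deriv_le
      (hU1.differentiable one_ne_zero) (fun x hx => (hdecay x hx).2.1) le_rfl ht.1)
  have hlip : ∀ s ∈ Icc 0 Y₀, ∀ t ∈ Icc s Y₀, |deriv Us t - deriv Us s| ≤ M₀ * (t - s) :=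
    fun s hs t ht => abs_sub_le_of_abs_deriv_le hUsC2.differentiable_deriv_two
      (fun x hx => (hdecay x hx).2.2) hs.1 ht.1
  have hr : 0 < min Y₀ (1 / 2) := lt_min hY₀pos one_half_pos
  obtain ⟨C, hC⟩ := exists_forall_le_of_tendsto_atTop (a := min Y₀ (1 / 2))
    (fun t ht => (hUsC2.continuous.continuousAt.inv₀
      (hUspos t (hr.trans_le ht)).ne').continuousWithinAt) (hUslim.inv₀ hUEpos.ne')
  obtain ⟨B, hB⟩ := exists_forall_le_of_tendsto_atTop hUsC2.continuous.continuousOn hUslim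
  refine ⟨fun Y hY => hasDerivAt_sq_mul_deriv_Gs_div_self hU1.continuous hUspos hY₀pos hY,
    tendsto_Gs_nhdsGT_zero hU1 hUspos hc hd0 hY₀pos hlow hup hlip,
    exists_weighted_bounds_of_near_far (min_le_left _ _) (min_le_right _ _)
      (fun Y hY => abs_Gs_le_near hU1 hUspos hc hd0 hlow hup hlip hY)
      (fun Y hY => abs_deriv_Gs_le_near hU1 hUspos hc hY₀le hlow hlip hY)
      (fun Y hY => abs_Gs_le_far hUspos hr (min_le_left _ _) hY₀le hC hB hY)
      (fun Y hY => abs_deriv_Gs_le_far (hU1.differentiable one_ne_zero) hUspos hr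
        (min_le_left _ _) hY₀le hC (fun t ht => (hdecay t (hr.le.trans ht)).1) hY)⟩

/-- `∂_Y (U_s² ∂_Y (G_s/U_s)) = 0` on `(0,∞)`, `G_s` extends continuously
to `Y=0` with value `1/U_s'(0)`, and `G_s/(1+Y) ∈ L^∞(0,∞)`,
`∂_Y G_s / log Y ∈ L^∞((0,1/2])`, `∂_Y G_s ∈ L^∞([1/2,∞))`. -/
theorem Gs_properties
    (Us : ℝ → ℝ) (UE Y₀ : ℝ)
    (hUsC2 : ContDiff ℝ 2 Us)
    (hUs0 : Us 0 = 0)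
    (hUspos : ∀ Y : ℝ, 0 < Y → 0 < Us Y)
    (hUEpos : 0 < UE)
    (hUslim : Tendsto Us atTop (nhds UE))
    (hUs'0 : 0 < deriv Us 0)
    (hUsdecay : ∃ M : ℝ, ∀ Y : ℝ, 0 ≤ Y →
      (1 + Y) ^ 3 * (|deriv Us Y| + |deriv (deriv Us) Y|) ≤ M)
    (hY₀pos : 0 < Y₀) (hY₀le : Y₀ ≤ 1)
    (hY₀mono : ∀ Y ∈ Icc (0:ℝ) (4 * Y₀), 0 < deriv Us Y) :
    (∀ Y ∈ Ioi (0:ℝ),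
      HasDerivAt (fun Z : ℝ => (Us Z) ^ 2 * deriv (fun W : ℝ => Gs Us Y₀ W / Us W) Z) 0 Y) ∧
    Tendsto (Gs Us Y₀) (nhdsWithin 0 (Ioi 0)) (nhds (1 / deriv Us 0)) ∧
    (∃ M : ℝ, 0 < M ∧
      (∀ Y ∈ Ioi (0:ℝ), |Gs Us Y₀ Y| / (1 + Y) ≤ M) ∧
      (∀ Y ∈ Ioc (0:ℝ) (1/2), |deriv (Gs Us Y₀) Y / Real.log Y| ≤ M) ∧
      (∀ Y ∈ Ici (1/2 : ℝ), |deriv (Gs Us Y₀) Y| ≤ M)) :=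
  Gs_properties_general Us UE Y₀ hUsC2 hUs0 hUspos hUEpos hUslim hUsdecay hY₀pos hY₀le hY₀mono
end
end

section
/- There exists a constant C > 0 such that for every g ∈ H¹(0,∞;ℂ) one has ‖g‖²_{L²(0,∞)} ≤ C ‖√U_s · g‖^{4/3}_{L²(0,∞)} ‖∂_Y g‖^{2/3}_{L²(0,∞)} + C ‖√U_s · g‖²_{L²(0,∞)}. -/
/-!
Fix `a ∈ (0, 1]`. The hypotheses on `U_s` give `U_s Y ≥ c · min Y 1`, so beyond `a` the weight is
at least `c a` and `∫_{Y > a} |g|² ≤ ‖√U_s g‖² / (c a)`. On `(0, a]`, `g` is compared with its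
value at a point `b ∈ (a, 2a]` where `|g|²` is below its mean over `(a, 2a]`; by Cauchy–Schwarz
`|g b - g Y|² ≤ 2a ‖∂_Y g‖²`. Hence `‖g‖² ≲ ‖√U_s g‖² / a + a² ‖∂_Y g‖²` for every such `a`, and
`a = (‖√U_s g‖ / ‖∂_Y g‖)^{2/3}` (or `a = 1` when this exceeds `1`) balances the two terms.
-/

open MeasureTheory Set Filter
open scoped Topology

noncomputable section

def nrm2 (f : ℝ → ℂ) : ℝ := Real.sqrt (∫ Y in Ioi (0:ℝ), ‖f Y‖ ^ 2)

theorem sq_norm_integral_le_measureReal_mul_integral_sq {α E : Type*} [MeasurableSpace α]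
    [NormedAddCommGroup E] [NormedSpace ℝ E] {μ : Measure α} [IsFiniteMeasure μ] {f : α → E}
    (hf : MemLp f 2 μ) : ‖∫ x, f x ∂μ‖ ^ 2 ≤ μ.real univ * ∫ x, ‖f x‖ ^ 2 ∂μ := by
  have holder := integral_mul_norm_le_Lp_mul_Lq .two_two (f := fun x => ‖f x‖)
    (g := fun _ => (1 : ℝ)) (by simpa using hf.norm) (by simpa using memLp_const (1 : ℝ))
  simp only [norm_norm, norm_one, mul_one, one_pow, integral_const, smul_eq_mul,
    Real.rpow_two] at holder
  have h1 : ‖∫ x, f x ∂μ‖ ≤ √(∫ x, ‖f x‖ ^ 2 ∂μ) * √(μ.real univ) := by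
    rw [Real.sqrt_eq_rpow, Real.sqrt_eq_rpow]
    exact (norm_integral_le_integral_norm f).trans holder
  calc ‖∫ x, f x ∂μ‖ ^ 2 ≤ (√(∫ x, ‖f x‖ ^ 2 ∂μ) * √(μ.real univ)) ^ 2 := by gcongr
    _ = μ.real univ * ∫ x, ‖f x‖ ^ 2 ∂μ := by
      rw [mul_pow, Real.sq_sqrt (by positivity), Real.sq_sqrt (by positivity), mul_comm]

theorem const_mul_setIntegral_le_setIntegral_mul {α : Type*} [MeasurableSpace α]
    {μ : Measure α} {s t : Set α} {w F : α → ℝ} {κ : ℝ} (hst : s ⊆ t) (hs : MeasurableSet s)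
    (ht : MeasurableSet t) (hF : ∀ x ∈ s, 0 ≤ F x) (hκw : ∀ x ∈ s, κ ≤ w x)
    (hwF : ∀ x ∈ t, 0 ≤ w x * F x) (hFi : IntegrableOn F s μ)
    (hwFi : IntegrableOn (fun x => w x * F x) t μ) :
    κ * ∫ x in s, F x ∂μ ≤ ∫ x in t, w x * F x ∂μ := by
  rw [← integral_const_mul]
  calc ∫ x in s, κ * F x ∂μ ≤ ∫ x in s, w x * F x ∂μ :=
        setIntegral_mono_on (hFi.const_mul κ) (hwFi.mono_set hst) hs
          fun x hx => mul_le_mul_of_nonneg_right (hκw x hx) (hF x hx)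
    _ ≤ ∫ x in t, w x * F x ∂μ :=
        setIntegral_mono_set hwFi ((ae_restrict_mem ht).mono hwF) hst.eventuallyLE

theorem le_of_forall_le_div_add_sq_mul {N A B K : ℝ} (hA : 0 ≤ A) (hB : 0 ≤ B) (hK : 0 ≤ K)
    (h : ∀ a, 0 < a → a ≤ 1 → N ≤ K * (A ^ 2 / a + a ^ 2 * B ^ 2)) :
    N ≤ 2 * K * A ^ ((4 : ℝ) / 3) * B ^ ((2 : ℝ) / 3) + 2 * K * A ^ 2 := by
  rcases le_or_gt B A with hBA | hAB
  · have h1 := h 1 one_pos le_rfl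
    have hKB : K * B ^ 2 ≤ K * A ^ 2 := by gcongr
    nlinarith [show 0 ≤ 2 * K * A ^ ((4 : ℝ) / 3) * B ^ ((2 : ℝ) / 3) by positivity]
  rcases hA.eq_or_lt with rfl | hA
  · have hlim : Tendsto (fun a : ℝ => K * (0 ^ 2 / a + a ^ 2 * B ^ 2)) (𝓝[>] 0) (𝓝 0) := by
      simp only [ne_eq, OfNat.ofNat_ne_zero, not_false_eq_true, zero_pow, zero_div, zero_add]
      exact tendsto_nhdsWithin_of_tendsto_nhds (Continuous.tendsto' (by fun_prop) _ _ (by simp))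
    have hN : N ≤ 0 := ge_of_tendsto hlim <| by
      filter_upwards [Ioo_mem_nhdsGT one_pos] with a ha using h a ha.1 ha.2.le
    simpa [Real.zero_rpow] using hN
  -- With `A = α³` and `B = β³`, the choice `a = (α / β)²` balances the two terms.
  have hpow : ∀ {x : ℝ} (n : ℕ), 0 ≤ x → x ^ ((n : ℝ) / 3) = (x ^ ((3 : ℕ)⁻¹ : ℝ)) ^ n :=
    fun n hx => by rw [← Real.rpow_mul_natCast hx]; ring_nf
  rw [show ((4 : ℝ) / 3) = ((4 : ℕ) : ℝ) / 3 by norm_num,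
    show ((2 : ℝ) / 3) = ((2 : ℕ) : ℝ) / 3 by norm_num, hpow 4 hA.le, hpow 2 hB]
  have hAα : A = (A ^ ((3 : ℕ)⁻¹ : ℝ)) ^ 3 := (Real.rpow_inv_natCast_pow hA.le (by norm_num)).symm
  have hBβ : B = (B ^ ((3 : ℕ)⁻¹ : ℝ)) ^ 3 := (Real.rpow_inv_natCast_pow hB (by norm_num)).symm
  have hαβ : A ^ ((3 : ℕ)⁻¹ : ℝ) < B ^ ((3 : ℕ)⁻¹ : ℝ) := Real.rpow_lt_rpow hA.le hAB (by norm_num)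
  have hα : 0 < A ^ ((3 : ℕ)⁻¹ : ℝ) := Real.rpow_pos_of_pos hA _
  generalize A ^ ((3 : ℕ)⁻¹ : ℝ) = α at *
  generalize B ^ ((3 : ℕ)⁻¹ : ℝ) = β at *
  subst hAα hBβ
  have hβ : 0 < β := hα.trans hαβ
  have key := h ((α / β) ^ 2) (pow_pos (div_pos hα hβ) 2)
    (pow_le_one₀ (div_pos hα hβ).le ((div_le_one hβ).2 hαβ.le))
  have : K * ((α ^ 3) ^ 2 / (α / β) ^ 2 + ((α / β) ^ 2) ^ 2 * (β ^ 3) ^ 2) =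
      2 * K * α ^ 4 * β ^ 2 := by
    field_simp; ring
  nlinarith [show 0 ≤ 2 * K * (α ^ 3) ^ 2 by positivity]

theorem HasDerivAt.eventually_nhdsGT_mul_le {f : ℝ → ℝ} {d l : ℝ} (hf : HasDerivAt f d 0)
    (h0 : f 0 = 0) (hl : l < d) : ∀ᶠ Y in 𝓝[>] 0, l * Y ≤ f Y := by
  filter_upwards [hf.tendsto_slope_zero_right.eventually (lt_mem_nhds hl), self_mem_nhdsWithin]
    with Y hY hY0
  rw [zero_add, h0, sub_zero, smul_eq_mul, lt_inv_mul_iff₀ hY0, mul_comm] at hY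
  exact hY.le

theorem exists_pos_mul_min_one_le {f : ℝ → ℝ} (hf : Continuous f) (hpos : ∀ Y, 0 < Y → 0 < f Y)
    {l₀ l : ℝ} (hl₀ : 0 < l₀) (hl : 0 < l) (hzero : ∀ᶠ Y in 𝓝[>] 0, l₀ * Y ≤ f Y)
    (htop : ∀ᶠ Y in atTop, l ≤ f Y) : ∃ c > 0, ∀ Y, 0 < Y → c * min Y 1 ≤ f Y := by
  obtain ⟨ε, hε, hε₀⟩ := (nhdsGT_basis 0).eventually_iff.1 hzero
  obtain ⟨R, hR⟩ := eventually_atTop.1 htop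
  obtain ⟨y, hy, hymin⟩ := isCompact_Icc.exists_isMinOn (nonempty_Icc.2 (le_max_left (ε / 2) R))
    hf.continuousOn
  have hfy : 0 < f y := hpos y ((half_pos hε).trans_le hy.1)
  refine ⟨min l₀ (min (f y) l), by positivity, fun Y hY => ?_⟩
  rcases le_or_gt Y (ε / 2) with hYε | hYε
  · calc min l₀ (min (f y) l) * min Y 1 ≤ l₀ * Y :=
          mul_le_mul (min_le_left _ _) (min_le_left _ _) (by positivity) hl₀.le
      _ ≤ f Y := hε₀ ⟨hY, hYε.trans_lt (half_lt_self hε)⟩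
  rcases le_or_gt Y (max (ε / 2) R) with hYR | hYR
  · calc min l₀ (min (f y) l) * min Y 1 ≤ f y * 1 :=
          mul_le_mul ((min_le_right _ _).trans (min_le_left _ _)) (min_le_right _ _)
            (by positivity) hfy.le
      _ ≤ f Y := (mul_one (f y)).symm ▸ hymin ⟨hYε.le, hYR⟩
  · calc min l₀ (min (f y) l) * min Y 1 ≤ l * 1 :=
          mul_le_mul ((min_le_right _ _).trans (min_le_right _ _)) (min_le_right _ _)
            (by positivity) hl.le
      _ ≤ f Y := (mul_one l).symm ▸ hR Y ((le_max_right _ _).trans hYR.le)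

theorem Continuous.bddAbove_image_Ici_of_tendsto {f : ℝ → ℝ} {L : ℝ} (hf : Continuous f)
    (hlim : Tendsto f atTop (𝓝 L)) (a : ℝ) : BddAbove (f '' Ici a) := by
  obtain ⟨R, hR⟩ := eventually_atTop.1 (hlim.eventually (eventually_le_nhds (lt_add_one L)))
  obtain ⟨M, hM⟩ := (isCompact_Icc (a := a) (b := R)).bddAbove_image hf.continuousOn
  refine ⟨max M (L + 1), ?_⟩
  rintro _ ⟨Y, hY, rfl⟩
  rcases le_total Y R with hYR | hRY
  · exact (hM ⟨Y, ⟨hY, hYR⟩, rfl⟩).trans (le_max_left _ _)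
  · exact (hR Y hRY).trans (le_max_right _ _)

section HalfLine

variable {g g1 : ℝ → ℂ}

theorem integrableOn_Ioc_of_memLp_Ioi (hg : MemLp g 2 (volume.restrict (Ioi 0))) {u v : ℝ}
    (hu : 0 ≤ u) : IntegrableOn g (Ioc u v) :=
  (hg.mono_measure (Measure.restrict_mono (fun _ hx => hu.trans_lt hx.1) le_rfl)).integrable
    one_le_two

variable (hg1 : MemLp g1 2 (volume.restrict (Ioi 0)))
  (hrep : ∀ Y ∈ Ici (0 : ℝ), g Y = g 0 + ∫ t in (0 : ℝ)..Y, g1 t)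
include hg1 hrep

theorem norm_sub_sq_le_of_integral_rep {y b : ℝ} (hy : 0 ≤ y) (hyb : y ≤ b) :
    ‖g b - g y‖ ^ 2 ≤ (b - y) * ∫ t in Ioi 0, ‖g1 t‖ ^ 2 := by
  have hint : ∀ {x : ℝ}, 0 ≤ x → IntervalIntegrable g1 volume 0 x := fun hx =>
    (intervalIntegrable_iff_integrableOn_Ioc_of_le hx).2 (integrableOn_Ioc_of_memLp_Ioi hg1 le_rfl)
  have hdiff : g b - g y = ∫ t in Ioc y b, g1 t := by
    rw [hrep b (hy.trans hyb), hrep y hy, add_sub_add_left_eq_sub,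
      intervalIntegral.integral_interval_sub_left (hint (hy.trans hyb)) (hint hy),
      intervalIntegral.integral_of_le hyb]
  have hsub : Ioc y b ⊆ Ioi 0 := fun t ht => hy.trans_lt ht.1
  calc ‖g b - g y‖ ^ 2 ≤ volume.real (Ioc y b) * ∫ t in Ioc y b, ‖g1 t‖ ^ 2 := by
        rw [hdiff, ← measureReal_restrict_apply_univ]
        exact sq_norm_integral_le_measureReal_mul_integral_sq
          (hg1.mono_measure (Measure.restrict_mono hsub le_rfl))
    _ ≤ (b - y) * ∫ t in Ioi 0, ‖g1 t‖ ^ 2 := by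
        rw [Real.volume_real_Ioc_of_le hyb]
        exact mul_le_mul_of_nonneg_left (setIntegral_mono_set
          (hg1.integrable_norm_pow two_ne_zero) (Eventually.of_forall fun _ => by positivity)
          hsub.eventuallyLE) (sub_nonneg.2 hyb)

theorem integral_norm_sq_le_tail_add (hg : MemLp g 2 (volume.restrict (Ioi 0))) {a : ℝ}
    (ha : 0 < a) :
    ∫ Y in Ioi 0, ‖g Y‖ ^ 2 ≤
      3 * (∫ Y in Ioi a, ‖g Y‖ ^ 2) + 4 * a ^ 2 * ∫ Y in Ioi 0, ‖g1 Y‖ ^ 2 := by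
  set T := ∫ Y in Ioi a, ‖g Y‖ ^ 2
  set B := ∫ Y in Ioi 0, ‖g1 Y‖ ^ 2
  have hsq : IntegrableOn (fun Y => ‖g Y‖ ^ 2) (Ioi 0) := hg.integrable_norm_pow two_ne_zero
  obtain ⟨b, hb, hgb⟩ := exists_le_setAverage (μ := volume) (s := Ioc a (2 * a))
    (by simp [ha]) measure_Ioc_lt_top.ne (hsq.mono_set fun _ hx => ha.trans hx.1)
  have hgb_le : ‖g b‖ ^ 2 ≤ T / a := by
    rw [setAverage_eq, Real.volume_real_Ioc_of_le (by linarith), smul_eq_mul,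
      show 2 * a - a = a by ring, inv_mul_eq_div] at hgb
    exact hgb.trans (div_le_div_of_nonneg_right (setIntegral_mono_set (hsq.mono_set
      (Ioi_subset_Ioi ha.le)) (Eventually.of_forall fun _ => by positivity)
      Ioc_subset_Ioi_self.eventuallyLE) ha.le)
  have hpt : ∀ Y ∈ Ioc 0 a, ‖g Y‖ ^ 2 ≤ 2 * T / a + 4 * a * B := by
    intro Y hY
    have hdiff : ‖g b - g Y‖ ^ 2 ≤ (b - Y) * B :=
      norm_sub_sq_le_of_integral_rep hg1 hrep hY.1.le (hY.2.trans hb.1.le)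
    have htri : ‖g Y‖ ≤ ‖g b‖ + ‖g b - g Y‖ := by
      rw [norm_sub_rev]; exact norm_le_norm_add_norm_sub' _ _
    have hB : 0 ≤ B := setIntegral_nonneg measurableSet_Ioi fun _ _ => by positivity
    have hbY : (b - Y) * B ≤ 2 * a * B :=
      mul_le_mul_of_nonneg_right (by linarith [hY.1, hb.2]) hB
    calc ‖g Y‖ ^ 2 ≤ 2 * ‖g b‖ ^ 2 + 2 * ‖g b - g Y‖ ^ 2 := by
          nlinarith [sq_nonneg (‖g b‖ - ‖g b - g Y‖), norm_nonneg (g Y)]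
      _ ≤ 2 * T / a + 4 * a * B := by rw [mul_div_assoc]; linarith
  have hfront : ∫ Y in Ioc 0 a, ‖g Y‖ ^ 2 ≤ 2 * T + 4 * a ^ 2 * B := by
    calc ∫ Y in Ioc 0 a, ‖g Y‖ ^ 2 ≤ ∫ _ in Ioc 0 a, (2 * T / a + 4 * a * B) :=
          setIntegral_mono_on (hsq.mono_set Ioc_subset_Ioi_self)
            (integrableOn_const measure_Ioc_lt_top.ne) measurableSet_Ioc hpt
      _ = 2 * T + 4 * a ^ 2 * B := by
          rw [setIntegral_const, Real.volume_real_Ioc_of_le ha.le, smul_eq_mul]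
          field_simp
          ring
  have hsplit : ∫ Y in Ioi 0, ‖g Y‖ ^ 2 = (∫ Y in Ioc 0 a, ‖g Y‖ ^ 2) + T := by
    rw [← Ioc_union_Ioi_eq_Ioi ha.le, setIntegral_union (Ioc_disjoint_Ioi le_rfl)
      measurableSet_Ioi (hsq.mono_set Ioc_subset_Ioi_self) (hsq.mono_set (Ioi_subset_Ioi ha.le))]
  linarith

theorem integral_norm_sq_le_of_weight (hg : MemLp g 2 (volume.restrict (Ioi 0))) {w : ℝ → ℝ}
    {c a : ℝ} (hc : 0 < c) (hw : ∀ Y, 0 < Y → c * min Y 1 ≤ w Y) (hwM : BddAbove (w '' Ici 0))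
    (hwm : Measurable w) (ha : 0 < a) (ha1 : a ≤ 1) :
    ∫ Y in Ioi 0, ‖g Y‖ ^ 2 ≤
      3 / (c * a) * (∫ Y in Ioi 0, w Y * ‖g Y‖ ^ 2) + 4 * a ^ 2 * ∫ Y in Ioi 0, ‖g1 Y‖ ^ 2 := by
  have hsq : IntegrableOn (fun Y => ‖g Y‖ ^ 2) (Ioi 0) := hg.integrable_norm_pow two_ne_zero
  have hw0 : ∀ Y ∈ Ioi (0 : ℝ), 0 ≤ w Y := fun Y hY =>
    (mul_pos hc (lt_min hY one_pos)).le.trans (hw Y hY)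
  obtain ⟨M, hM⟩ := hwM
  have hwi : IntegrableOn (fun Y => w Y * ‖g Y‖ ^ 2) (Ioi 0) :=
    hsq.bdd_mul hwm.aestronglyMeasurable <| (ae_restrict_mem measurableSet_Ioi).mono fun Y hY => by
      rw [Real.norm_of_nonneg (hw0 Y hY)]
      exact hM ⟨Y, mem_Ici.2 (le_of_lt hY), rfl⟩
  have htail : c * a * ∫ Y in Ioi a, ‖g Y‖ ^ 2 ≤ ∫ Y in Ioi 0, w Y * ‖g Y‖ ^ 2 :=
    const_mul_setIntegral_le_setIntegral_mul (Ioi_subset_Ioi ha.le) measurableSet_Ioi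
      measurableSet_Ioi (fun _ _ => by positivity)
      (fun Y hY => (mul_le_mul_of_nonneg_left (le_min (le_of_lt hY) ha1) hc.le).trans
        (hw Y (ha.trans hY)))
      (fun Y hY => mul_nonneg (hw0 Y hY) (by positivity))
      (hsq.mono_set (Ioi_subset_Ioi ha.le)) hwi
  have hT : ∫ Y in Ioi a, ‖g Y‖ ^ 2 ≤ (∫ Y in Ioi 0, w Y * ‖g Y‖ ^ 2) / (c * a) := by
    rw [le_div_iff₀ (by positivity), mul_comm]
    exact htail
  have := integral_norm_sq_le_tail_add hg1 hrep hg ha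
  rw [div_mul_eq_mul_div, mul_div_assoc]
  linarith

end HalfLine

theorem sq_nrm2 (f : ℝ → ℂ) : nrm2 f ^ 2 = ∫ Y in Ioi 0, ‖f Y‖ ^ 2 :=
  Real.sq_sqrt (setIntegral_nonneg measurableSet_Ioi fun _ _ => by positivity)

theorem sq_nrm2_sqrt_mul {w : ℝ → ℝ} (hw : ∀ Y, 0 < Y → 0 ≤ w Y) (g : ℝ → ℂ) :
    nrm2 (fun Y => (√(w Y) : ℂ) * g Y) ^ 2 = ∫ Y in Ioi 0, w Y * ‖g Y‖ ^ 2 := by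
  rw [sq_nrm2]
  refine setIntegral_congr_fun measurableSet_Ioi fun Y hY => ?_
  simp only [norm_mul, Complex.norm_real, Real.norm_of_nonneg (Real.sqrt_nonneg _), mul_pow,
    Real.sq_sqrt (hw Y hY)]

theorem sqrtUs_interpolation_inequality_general
    (Us : ℝ → ℝ) (UE : ℝ)
    (hUsC2 : ContDiff ℝ 2 Us)
    (hUs0 : Us 0 = 0)
    (hUspos : ∀ Y : ℝ, 0 < Y → 0 < Us Y)
    (hUEpos : 0 < UE)
    (hUslim : Tendsto Us atTop (nhds UE))
    (hUs'0 : 0 < deriv Us 0) :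
    ∃ C : ℝ, 0 < C ∧
      ∀ g g1 : ℝ → ℂ,
        MemLp g 2 (volume.restrict (Ioi 0)) →
        MemLp g1 2 (volume.restrict (Ioi 0)) →
        (∀ Y ∈ Ici (0:ℝ), g Y = g 0 + ∫ t in (0:ℝ)..Y, g1 t) →
        nrm2 g ^ 2 ≤
          C * nrm2 (fun Y => (Real.sqrt (Us Y) : ℂ) * g Y) ^ ((4:ℝ)/3)
              * nrm2 g1 ^ ((2:ℝ)/3)
            + C * nrm2 (fun Y => (Real.sqrt (Us Y) : ℂ) * g Y) ^ 2 := by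
  have hcont : Continuous Us := hUsC2.continuous
  obtain ⟨c, hc, hcUs⟩ := exists_pos_mul_min_one_le hcont hUspos (half_pos hUs'0)
    (half_pos hUEpos)
    ((hUsC2.differentiable two_ne_zero 0).hasDerivAt.eventually_nhdsGT_mul_le hUs0
      (half_lt_self hUs'0))
    (hUslim.eventually (eventually_ge_nhds (half_lt_self hUEpos)))
  set K := max (3 / c) 4
  refine ⟨2 * K, by positivity, fun g g1 hg hg1 hrep => ?_⟩
  refine le_of_forall_le_div_add_sq_mul (Real.sqrt_nonneg _) (Real.sqrt_nonneg _) (by positivity)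
    fun a ha ha1 => ?_
  rw [sq_nrm2_sqrt_mul (fun Y hY => (hUspos Y hY).le), sq_nrm2, sq_nrm2]
  set W := ∫ Y in Ioi 0, Us Y * ‖g Y‖ ^ 2
  set B := ∫ Y in Ioi 0, ‖g1 Y‖ ^ 2
  have hW : 0 ≤ W / a := div_nonneg (setIntegral_nonneg measurableSet_Ioi fun Y hY =>
    mul_nonneg (hUspos Y hY).le (by positivity)) ha.le
  have hB : 0 ≤ a ^ 2 * B :=
    mul_nonneg (sq_nonneg a) (setIntegral_nonneg measurableSet_Ioi fun _ _ => by positivity)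
  calc ∫ Y in Ioi 0, ‖g Y‖ ^ 2 ≤ 3 / (c * a) * W + 4 * a ^ 2 * B :=
        integral_norm_sq_le_of_weight hg1 hrep hg hc hcUs
          (hcont.bddAbove_image_Ici_of_tendsto hUslim 0) hcont.measurable ha ha1
    _ = 3 / c * (W / a) + 4 * (a ^ 2 * B) := by ring
    _ ≤ K * (W / a + a ^ 2 * B) := by
        rw [mul_add]
        gcongr
        exacts [le_max_left _ _, le_max_right _ _]

/-- There is a constant `C > 0` such that for every `g ∈ H¹(0,∞;ℂ)`
(represented by an absolutely continuous `g` with `L²` weak derivative `g1`)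
`‖g‖² ≤ C ‖√U_s g‖^{4/3} ‖∂_Y g‖^{2/3} + C ‖√U_s g‖²`. -/
theorem sqrtUs_interpolation_inequality
    (Us : ℝ → ℝ) (UE : ℝ)
    (hUsC2 : ContDiff ℝ 2 Us)
    (hUs0 : Us 0 = 0)
    (hUspos : ∀ Y : ℝ, 0 < Y → 0 < Us Y)
    (hUEpos : 0 < UE)
    (hUslim : Tendsto Us atTop (nhds UE))
    (hUs'0 : 0 < deriv Us 0)
    (hUsdecay : ∃ M : ℝ, ∀ Y : ℝ, 0 ≤ Y →
      (1 + Y) ^ 3 * (|deriv Us Y| + |deriv (deriv Us) Y|) ≤ M) :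
    ∃ C : ℝ, 0 < C ∧
      ∀ g g1 : ℝ → ℂ,
        MemLp g 2 (volume.restrict (Ioi 0)) →
        MemLp g1 2 (volume.restrict (Ioi 0)) →
        (∀ Y ∈ Ici (0:ℝ), g Y = g 0 + ∫ t in (0:ℝ)..Y, g1 t) →
        nrm2 g ^ 2 ≤
          C * nrm2 (fun Y => (Real.sqrt (Us Y) : ℂ) * g Y) ^ ((4:ℝ)/3)
              * nrm2 g1 ^ ((2:ℝ)/3)
            + C * nrm2 (fun Y => (Real.sqrt (Us Y) : ℂ) * g Y) ^ 2 :=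
  sqrtUs_interpolation_inequality_general Us UE hUsC2 hUs0 hUspos hUEpos hUslim hUs'0
end
end
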